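/- Two self-nested finite unordered rooted trees with the same height profile are isomorphic; equivalently, a self-nested tree can be uniquely reconstructed from its height profile. -/

import Mathlib

/-!
Induction on the height `h`. In a self-nested tree `s` any two vertices of height `h` root
isomorphic subtrees, so they have the same numbers `γ_k` of children of each height `k`; hence
every entry `ρ_s(h, k)` is a constant multiset. Equality of profiles then forces every vertex `v`
of `t` of height `h` to have, for each `k`, as many children of height `k` as any vertex `w` of `s`
of height `h`. Matching the children of `v` and `w` height by height and gluing the isomorphisms
between their subtrees given by the induction hypothesis yields `t[v] ≅ s[w]`. The roots have the
same height because `ρ(H(t), 0)` records the root of `t` and so forces a vertex of height `H(t)`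
in `s`, and symmetrically.
-/

/-- A finite rooted tree whose vertices form a finite subset `supp` of `ℕ`.
`par` maps each vertex to its parent; the root is a fixed point of `par`
(so it has no parent), and every vertex reaches the root by iterating `par`
(connectedness / acyclicity). -/
structure FTree where
  supp : Finset ℕ
  root : ℕ
  root_mem : root ∈ supp
  par : ℕ → ℕ
  par_mem : ∀ v ∈ supp, par v ∈ supp
  par_root : par root = root
  reach : ∀ v ∈ supp, ∃ n, par^[n] v = root

namespace FTree

/-- Depth of a vertex: least number of parent steps needed to reach the root. -/
noncomputable def depth (t : FTree) (v : ℕ) : ℕ :=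
  if h : v ∈ t.supp then Nat.find (t.reach v h) else 0

/-- `w` is a (weak) descendant of `v` in `t`. -/
def IsDesc (t : FTree) (v w : ℕ) : Prop :=
  w ∈ t.supp ∧ ∃ n ≤ t.depth w, t.par^[n] w = v

open Classical in
/-- Vertex set of the subtree `t[v]` rooted at `v`. -/
noncomputable def desc (t : FTree) (v : ℕ) : Finset ℕ :=
  t.supp.filter (fun w => t.IsDesc v w)

/-- Height of the subtree `t[v]` rooted at `v`. -/
noncomputable def heightAt (t : FTree) (v : ℕ) : ℕ :=
  (t.desc v).sup (fun w => t.depth w) - t.depth v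

/-- Height of the tree. -/
noncomputable def height (t : FTree) : ℕ := t.heightAt t.root

/-- The set of children of `v` in `t`. -/
def children (t : FTree) (v : ℕ) : Finset ℕ :=
  t.supp.filter (fun w => t.par w = v ∧ w ≠ t.root)

open Classical in
/-- `γ_h(v)`: number of children of `v` whose subtree has height `h`. -/
noncomputable def gam (t : FTree) (v h : ℕ) : ℕ :=
  ((t.children v).filter (fun c => t.heightAt c = h)).card

/-- The subtree of `t` rooted at `v` is isomorphic (as an unordered rooted tree)
to the subtree of `s` rooted at `w`: a bijection between the vertex sets sending
root to root and commuting with the parent maps (i.e. mapping edges to edges). -/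
def SubtreeIso (t : FTree) (v : ℕ) (s : FTree) (w : ℕ) : Prop :=
  ∃ φ : ℕ → ℕ, Set.BijOn φ (t.desc v : Set ℕ) (s.desc w : Set ℕ) ∧ φ v = w ∧
    ∀ x ∈ t.desc v, x ≠ v → φ (t.par x) = s.par (φ x)

/-- Isomorphism of rooted trees. -/
def TreeIso (t s : FTree) : Prop := SubtreeIso t t.root s s.root

/-- A tree is self-nested if any two of its subtrees of the same height
are isomorphic. -/
def SelfNested (t : FTree) : Prop :=
  ∀ v ∈ t.supp, ∀ w ∈ t.supp, t.heightAt v = t.heightAt w → SubtreeIso t v t w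

open Classical in
/-- Height profile entry `ρ_t(h1,h2)`: the multiset (family up to permutation) of
the values `γ_{h2}(v)` over all vertices `v` of `t` with `H(t[v]) = h1`. -/
noncomputable def profile (t : FTree) (h1 h2 : ℕ) : Multiset ℕ :=
  (t.supp.filter (fun v => t.heightAt v = h1)).val.map (fun v => t.gam v h2)

/-- Number of vertices of `t`. -/
def numV (t : FTree) : ℕ := t.supp.card

/-- `a` is a (weak) ancestor of `b`. -/
def IsAnc (t : FTree) (a b : ℕ) : Prop := ∃ n, t.par^[n] b = a

/-- `a` is a proper ancestor of `b`. -/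
def ProperAnc (t : FTree) (a b : ℕ) : Prop := a ≠ b ∧ t.IsAnc a b

/-- `l` is the least common ancestor of `a` and `b`. -/
def IsLCA (t : FTree) (a b l : ℕ) : Prop :=
  l ∈ t.supp ∧ t.IsAnc l a ∧ t.IsAnc l b ∧
    ∀ m ∈ t.supp, t.IsAnc m a → t.IsAnc m b → t.IsAnc m l

/-- `φ`, restricted to the domain `D ⊆ t.supp`, is a constrained mapping in the
sense of Zhang from `t` to `s`: a one-to-one correspondence preserving the
ancestor order, satisfying moreover Zhang's condition on least common ancestors. -/
def ZhangMapping (t s : FTree) (D : Finset ℕ) (φ : ℕ → ℕ) : Prop :=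
  D ⊆ t.supp ∧ (∀ x ∈ D, φ x ∈ s.supp) ∧ Set.InjOn φ (D : Set ℕ) ∧
  (∀ a ∈ D, ∀ b ∈ D, (t.ProperAnc a b ↔ s.ProperAnc (φ a) (φ b))) ∧
  (∀ v1 ∈ D, ∀ v2 ∈ D, ∀ v3 ∈ D, ∀ l l',
    t.IsLCA v1 v2 l → s.IsLCA (φ v1) (φ v2) l' →
    (t.ProperAnc l v3 ↔ s.ProperAnc l' (φ v3)))

/-- Allowed inserting operation (AI): adding a new internal vertex `w` as a child of
`v`, making `w` the parent of the child `c` of `v`; allowed only if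
`H(t[c]) + 1 < H(t[v])`. -/
def InsertAI (t θ : FTree) : Prop :=
  ∃ v c w, v ∈ t.supp ∧ c ∈ t.children v ∧ w ∉ t.supp ∧
    t.heightAt c + 1 < t.heightAt v ∧
    θ.supp = insert w t.supp ∧ θ.root = t.root ∧
    θ.par w = v ∧ θ.par c = w ∧ ∀ x ∈ t.supp, x ≠ c → θ.par x = t.par x

/-- Allowed inserting operation (AS): attaching a tree `s` as a new child subtree of
`v`; allowed only if `H(s) + 1 ≤ H(t[v])`. -/
def InsertAS (t θ : FTree) : Prop :=
  ∃ (v : ℕ) (s : FTree), v ∈ t.supp ∧ Disjoint s.supp t.supp ∧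
    s.height + 1 ≤ t.heightAt v ∧
    θ.supp = t.supp ∪ s.supp ∧ θ.root = t.root ∧ θ.par s.root = v ∧
    (∀ x ∈ t.supp, θ.par x = t.par x) ∧ (∀ x ∈ s.supp, x ≠ s.root → θ.par x = s.par x)

/-- One allowed inserting operation. -/
def InsertStep (t θ : FTree) : Prop := InsertAI t θ ∨ InsertAS t θ

/-- Allowed deleting operation (DI): deleting an internal vertex `v`, child of `u`,
having a unique child `c` (which becomes a child of `u`); allowed only if `u` has
another child `v'` with `H(t[v']) ≥ H(t[v])`. -/
def DeleteDI (t θ : FTree) : Prop :=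
  ∃ u v c, v ∈ t.children u ∧ t.children v = {c} ∧
    (∃ v' ∈ t.children u, v' ≠ v ∧ t.heightAt v ≤ t.heightAt v') ∧
    θ.supp = t.supp.erase v ∧ θ.root = t.root ∧ θ.par c = u ∧
    ∀ x ∈ t.supp, x ≠ v → x ≠ c → θ.par x = t.par x

/-- Allowed deleting operation (DS): deleting the whole subtree rooted at a child `w`
of `v`; allowed only if `v` has another child `w'` with `H(t[w']) + 1 = H(t[v])`. -/
def DeleteDS (t θ : FTree) : Prop :=
  ∃ v w, w ∈ t.children v ∧
    (∃ w' ∈ t.children v, w' ≠ w ∧ t.heightAt w' + 1 = t.heightAt v) ∧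
    θ.supp = t.supp \ t.desc w ∧ θ.root = t.root ∧
    ∀ x ∈ θ.supp, θ.par x = t.par x

/-- One allowed deleting operation. -/
def DeleteStep (t θ : FTree) : Prop := DeleteDI t θ ∨ DeleteDS t θ

/-- A general single-vertex inserting operation: a new vertex `w` is added as a child
of `v`, and the vertices of a subset `C` of the children of `v` become children of `w`. -/
def GeneralInsert (t θ : FTree) : Prop :=
  ∃ (v w : ℕ) (C : Finset ℕ), v ∈ t.supp ∧ w ∉ t.supp ∧ C ⊆ t.children v ∧
    θ.supp = insert w t.supp ∧ θ.root = t.root ∧ θ.par w = v ∧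
    (∀ x ∈ C, θ.par x = w) ∧ ∀ x ∈ t.supp, x ∉ C → θ.par x = t.par x

/-- Cost of a constrained mapping with domain `D`: vertices of `t` not in the domain
are deleted, vertices of `s` not in the image are inserted (unit costs). -/
def mappingCost (t s : FTree) (D : Finset ℕ) (φ : ℕ → ℕ) : ℕ :=
  (t.numV - D.card) + (s.numV - (D.image φ).card)

/-- Zhang's constrained edit distance between unordered trees: the minimal cost
associated with a constrained mapping between `t` and `s`. -/
noncomputable def DZ (t s : FTree) : ℕ :=
  sInf { c | ∃ (D : Finset ℕ) (φ : ℕ → ℕ), ZhangMapping t s D φ ∧ c = mappingCost t s D φ }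

end FTree

namespace FTree

variable {t s : FTree} {u v w x y : ℕ}

theorem iterate_par_mem (hv : v ∈ t.supp) (n : ℕ) : t.par^[n] v ∈ t.supp := by
  induction n with
  | zero => exact hv
  | succ n ih => rw [Function.iterate_succ_apply']; exact t.par_mem _ ih

theorem iterate_par_root (n : ℕ) : t.par^[n] t.root = t.root :=
  Function.iterate_fixed t.par_root n

theorem iterate_depth (hv : v ∈ t.supp) : t.par^[t.depth v] v = t.root := by
  rw [depth, dif_pos hv]; exact Nat.find_spec (t.reach v hv)

theorem depth_le_of_iterate {n : ℕ} (hv : v ∈ t.supp) (h : t.par^[n] v = t.root) :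
    t.depth v ≤ n := by
  rw [depth, dif_pos hv]; exact Nat.find_le h

theorem depth_root : t.depth t.root = 0 :=
  Nat.le_zero.1 (depth_le_of_iterate t.root_mem rfl)

theorem eq_root_of_depth_eq_zero (hv : v ∈ t.supp) (h : t.depth v = 0) : v = t.root := by
  simpa [h] using iterate_depth hv

theorem depth_iterate {n : ℕ} (hv : v ∈ t.supp) (hn : n ≤ t.depth v) :
    t.depth (t.par^[n] v) = t.depth v - n := by
  apply le_antisymm
  · apply depth_le_of_iterate (iterate_par_mem hv n)
    rw [← Function.iterate_add_apply, Nat.sub_add_cancel hn, iterate_depth hv]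
  · have := depth_le_of_iterate hv (n := t.depth (t.par^[n] v) + n)
      (by rw [Function.iterate_add_apply, iterate_depth (iterate_par_mem hv n)])
    omega

theorem depth_par (hv : v ∈ t.supp) (hr : v ≠ t.root) : t.depth (t.par v) + 1 = t.depth v := by
  have hpos : 0 < t.depth v := Nat.pos_of_ne_zero (hr ∘ eq_root_of_depth_eq_zero hv)
  have := depth_iterate hv (n := 1) hpos
  simp only [Function.iterate_one] at this
  omega

theorem mem_desc_iff : w ∈ t.desc v ↔
    w ∈ t.supp ∧ t.depth v ≤ t.depth w ∧ t.par^[t.depth w - t.depth v] w = v := by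
  classical
  rw [desc, Finset.mem_filter, IsDesc, and_self_left]
  refine and_congr_right fun hw => ⟨?_, fun h => ⟨_, Nat.sub_le _ _, h.2⟩⟩
  rintro ⟨n, hn, rfl⟩
  rw [depth_iterate hw hn, Nat.sub_sub_self hn]
  exact ⟨Nat.sub_le _ _, rfl⟩

theorem mem_desc_of_iterate {n : ℕ} (hw : w ∈ t.supp) (h : t.par^[n] w = v) : w ∈ t.desc v := by
  classical
  refine Finset.mem_filter.2 ⟨hw, hw, ?_⟩
  rcases le_or_gt n (t.depth w) with hn | hn
  · exact ⟨n, hn, h⟩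
  · refine ⟨t.depth w, le_rfl, ?_⟩
    rw [iterate_depth hw, ← h, ← Nat.sub_add_cancel hn.le, Function.iterate_add_apply,
      iterate_depth hw, iterate_par_root]

theorem mem_supp_of_mem_desc (h : w ∈ t.desc v) : w ∈ t.supp := (mem_desc_iff.1 h).1

theorem depth_le_of_mem_desc (h : w ∈ t.desc v) : t.depth v ≤ t.depth w := (mem_desc_iff.1 h).2.1

theorem iterate_of_mem_desc (h : w ∈ t.desc v) : t.par^[t.depth w - t.depth v] w = v :=
  (mem_desc_iff.1 h).2.2

theorem anc_mem_supp_of_mem_desc (h : w ∈ t.desc v) : v ∈ t.supp :=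
  iterate_of_mem_desc h ▸ iterate_par_mem (mem_supp_of_mem_desc h) _

theorem self_mem_desc (hv : v ∈ t.supp) : v ∈ t.desc v := mem_desc_of_iterate hv (n := 0) rfl

theorem mem_desc_root (hw : w ∈ t.supp) : w ∈ t.desc t.root :=
  mem_desc_of_iterate hw (iterate_depth hw)

theorem eq_of_mem_desc_of_depth_le (h : w ∈ t.desc v) (hd : t.depth w ≤ t.depth v) : w = v := by
  simpa [Nat.sub_eq_zero_of_le hd] using iterate_of_mem_desc h

theorem depth_lt_of_mem_desc (h : w ∈ t.desc v) (hwv : w ≠ v) : t.depth v < t.depth w :=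
  lt_of_not_ge fun hd => hwv (eq_of_mem_desc_of_depth_le h hd)

theorem desc_trans (h₁ : v ∈ t.desc u) (h₂ : w ∈ t.desc v) : w ∈ t.desc u := by
  refine mem_desc_of_iterate (mem_supp_of_mem_desc h₂)
    (n := (t.depth v - t.depth u) + (t.depth w - t.depth v)) ?_
  rw [Function.iterate_add_apply, iterate_of_mem_desc h₂, iterate_of_mem_desc h₁]

theorem eq_root_of_root_mem_desc (h : t.root ∈ t.desc v) : v = t.root :=
  (eq_of_mem_desc_of_depth_le h (depth_root ▸ Nat.zero_le _)).symm

theorem par_mem_desc (hw : w ∈ t.desc v) (hwv : w ≠ v) : t.par w ∈ t.desc v := by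
  have hws := mem_supp_of_mem_desc hw
  refine mem_desc_of_iterate (t.par_mem w hws) (n := t.depth w - t.depth v - 1) ?_
  rw [← Function.iterate_succ_apply, Nat.succ_eq_add_one,
    Nat.sub_add_cancel (Nat.sub_pos_of_lt (depth_lt_of_mem_desc hw hwv)), iterate_of_mem_desc hw]

theorem mem_children_iff : w ∈ t.children v ↔ w ∈ t.desc v ∧ t.depth w = t.depth v + 1 := by
  simp only [children, Finset.mem_filter]
  constructor
  · rintro ⟨hw, rfl, hr⟩
    exact ⟨mem_desc_of_iterate hw (n := 1) rfl, (depth_par hw hr).symm⟩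
  · rintro ⟨h, hd⟩
    have hws := mem_supp_of_mem_desc h
    refine ⟨hws, by simpa [hd] using iterate_of_mem_desc h, fun hr => ?_⟩
    rw [hr, depth_root] at hd
    omega

theorem mem_desc_of_mem_children (h : w ∈ t.children v) : w ∈ t.desc v :=
  (mem_children_iff.1 h).1

theorem mem_supp_of_mem_children (h : w ∈ t.children v) : w ∈ t.supp := (Finset.mem_filter.1 h).1

theorem par_eq_of_mem_children (h : w ∈ t.children v) : t.par w = v := (Finset.mem_filter.1 h).2.1

theorem desc_subset (h : v ∈ t.desc u) : t.desc v ⊆ t.desc u := fun _ => desc_trans h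

theorem ne_root_of_mem_desc (h : w ∈ t.desc v) (hwv : w ≠ v) : w ≠ t.root := by
  rintro rfl
  exact hwv (eq_root_of_root_mem_desc h).symm

theorem depth_par_of_mem_desc (h : w ∈ t.desc v) (hwv : w ≠ v) :
    t.depth (t.par w) + 1 = t.depth w :=
  depth_par (mem_supp_of_mem_desc h) (ne_root_of_mem_desc h hwv)

theorem iterate_mem_desc (h : w ∈ t.desc v) {n : ℕ} (hn : n ≤ t.depth w - t.depth v) :
    t.par^[n] w ∈ t.desc v := by
  refine mem_desc_of_iterate (iterate_par_mem (mem_supp_of_mem_desc h) n)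
    (n := t.depth w - t.depth v - n) ?_
  rw [← Function.iterate_add_apply, Nat.sub_add_cancel hn, iterate_of_mem_desc h]

theorem eq_or_exists_mem_desc_children (h : x ∈ t.desc v) :
    x = v ∨ ∃ c : t.children v, x ∈ t.desc c := by
  refine or_iff_not_imp_left.2 fun hxv => ⟨⟨t.par^[t.depth x - t.depth v - 1] x, ?_⟩, ?_⟩
  · have hlt := depth_lt_of_mem_desc h hxv
    refine mem_children_iff.2 ⟨iterate_mem_desc h (Nat.sub_le _ _), ?_⟩
    rw [depth_iterate (mem_supp_of_mem_desc h) (by omega)]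
    omega
  · exact mem_desc_of_iterate (mem_supp_of_mem_desc h) rfl

theorem ne_of_mem_desc_of_mem_children {c : ℕ} (hc : c ∈ t.children v) (hx : x ∈ t.desc c) :
    x ≠ v := by
  rintro rfl
  have := depth_le_of_mem_desc hx
  rw [(mem_children_iff.1 hc).2] at this
  omega

theorem eq_of_mem_desc_of_mem_children {c c' : ℕ} (hc : c ∈ t.children v)
    (hc' : c' ∈ t.children v) (hx : x ∈ t.desc c) (hx' : x ∈ t.desc c') : c = c' := by
  rw [← iterate_of_mem_desc hx, ← iterate_of_mem_desc hx', (mem_children_iff.1 hc).2,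
    (mem_children_iff.1 hc').2]

theorem heightAt_eq_sup (t : FTree) (v : ℕ) :
    t.heightAt v = (t.desc v).sup fun w => t.depth w - t.depth v :=
  Finset.apply_sup_eq_sup_comp_of_linearOrder (· - t.depth v)
    (fun _ _ h => Nat.sub_le_sub_right h _) (Nat.zero_sub _)

theorem heightAt_lt_of_mem_children {c : ℕ} (hc : c ∈ t.children v) :
    t.heightAt c < t.heightAt v := by
  obtain ⟨hcv, hdepth⟩ := mem_children_iff.1 hc
  have hc_le : t.depth c ≤ ((t.desc c).sup fun w => t.depth w) :=
    Finset.le_sup (self_mem_desc (mem_supp_of_mem_desc hcv))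
  have hsup_le : ((t.desc c).sup fun w => t.depth w) ≤ ((t.desc v).sup fun w => t.depth w) :=
    Finset.sup_mono (desc_subset hcv)
  rw [heightAt, heightAt]
  omega

theorem heightAt_le_height (hv : v ∈ t.supp) : t.heightAt v ≤ t.height := by
  have hsup_le :
      ((t.desc v).sup fun w => t.depth w) ≤ ((t.desc t.root).sup fun w => t.depth w) :=
    Finset.sup_mono (desc_subset (mem_desc_root hv))
  rw [height, heightAt, heightAt, depth_root]
  omega

theorem card_heightAt_fiber_children (v k : ℕ) :
    Fintype.card {c : t.children v // t.heightAt c = k} = t.gam v k := by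
  rw [gam, Fintype.card_subtype, Finset.univ_eq_attach, Finset.filter_attach (t.heightAt · = k),
    Finset.card_map, Finset.card_attach]

theorem exists_equiv_children_of_gam_eq (h : ∀ k, t.gam v k = s.gam w k) :
    ∃ e : t.children v ≃ s.children w, ∀ c, s.heightAt (e c) = t.heightAt c := by
  refine ⟨Equiv.ofFiberEquiv fun k => Fintype.equivOfCardEq ?_,
    Equiv.ofFiberEquiv_map (f := fun c : t.children v => t.heightAt c)
      (g := fun c : s.children w => s.heightAt c) _⟩
  rw [card_heightAt_fiber_children, card_heightAt_fiber_children, h]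

structure IsSubtreeIsoMap (t : FTree) (v : ℕ) (s : FTree) (w : ℕ) (φ : ℕ → ℕ) : Prop where
  bijOn : Set.BijOn φ (t.desc v) (s.desc w)
  map_root : φ v = w
  map_par : ∀ x ∈ t.desc v, x ≠ v → φ (t.par x) = s.par (φ x)

theorem subtreeIso_iff : SubtreeIso t v s w ↔ ∃ φ, IsSubtreeIsoMap t v s w φ :=
  ⟨fun ⟨φ, h₁, h₂, h₃⟩ => ⟨φ, h₁, h₂, h₃⟩, fun ⟨φ, h₁, h₂, h₃⟩ => ⟨φ, h₁, h₂, h₃⟩⟩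

namespace IsSubtreeIsoMap

variable {φ : ℕ → ℕ} (hφ : IsSubtreeIsoMap t v s w φ)
include hφ

theorem mem_desc (hy : y ∈ t.desc v) : φ y ∈ s.desc w := hφ.bijOn.mapsTo hy

theorem image_desc_self : (t.desc v).image φ = s.desc w :=
  Finset.coe_injective <| by rw [Finset.coe_image, hφ.bijOn.image_eq]

theorem map_ne_of_ne (hy : y ∈ t.desc v) (hyv : y ≠ v) : φ y ≠ w := fun h =>
  hyv <| hφ.bijOn.injOn hy (self_mem_desc (anc_mem_supp_of_mem_desc hy)) (h.trans hφ.map_root.symm)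

theorem depth_sub (hy : y ∈ t.desc v) :
    s.depth (φ y) - s.depth w = t.depth y - t.depth v := by
  induction hn : t.depth y - t.depth v generalizing y with
  | zero =>
    rw [eq_of_mem_desc_of_depth_le hy (by omega), hφ.map_root, Nat.sub_self]
  | succ n ih =>
    have hyv : y ≠ v := by rintro rfl; simp at hn
    have hpar := par_mem_desc hy hyv
    have ih := ih hpar (by have := depth_par_of_mem_desc hy hyv; omega)
    have hφy := hφ.mem_desc hy
    have hs := depth_par_of_mem_desc hφy (hφ.map_ne_of_ne hy hyv)
    have hw := depth_le_of_mem_desc (par_mem_desc hφy (hφ.map_ne_of_ne hy hyv))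
    rw [hφ.map_par y hy hyv] at ih
    omega

theorem map_iterate (hy : y ∈ t.desc v) {n : ℕ} (hn : n ≤ t.depth y - t.depth v) :
    φ (t.par^[n] y) = s.par^[n] (φ y) := by
  induction n generalizing y with
  | zero => rfl
  | succ n ih =>
    have hyv : y ≠ v := by rintro rfl; simp at hn
    have := depth_par_of_mem_desc hy hyv
    rw [Function.iterate_succ_apply, Function.iterate_succ_apply,
      ih (par_mem_desc hy hyv) (by omega), hφ.map_par y hy hyv]

theorem image_desc (hx : x ∈ t.desc v) : (t.desc x).image φ = s.desc (φ x) := by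
  ext z
  rw [Finset.mem_image]
  constructor
  · rintro ⟨y, hy, rfl⟩
    refine mem_desc_of_iterate (mem_supp_of_mem_desc (hφ.mem_desc (desc_trans hx hy)))
      (n := t.depth y - t.depth x) ?_
    rw [← hφ.map_iterate (desc_trans hx hy) (by have := depth_le_of_mem_desc hx; omega),
      iterate_of_mem_desc hy]
  · intro hz
    obtain ⟨y, hy, rfl⟩ := hφ.bijOn.surjOn (desc_trans (hφ.mem_desc hx) hz)
    have hdy := hφ.depth_sub hy
    have hdx := hφ.depth_sub hx
    have := depth_le_of_mem_desc hz
    have := depth_le_of_mem_desc hx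
    have := depth_le_of_mem_desc (hφ.mem_desc hx)
    have hm : s.depth (φ y) - s.depth (φ x) = t.depth y - t.depth x := by omega
    have hle : t.depth y - t.depth x ≤ t.depth y - t.depth v := by omega
    refine ⟨y, mem_desc_of_iterate (mem_supp_of_mem_desc hy) (hφ.bijOn.injOn
      (iterate_mem_desc hy hle) hx ?_), rfl⟩
    rw [hφ.map_iterate hy hle, ← hm, iterate_of_mem_desc hz]

theorem restrict (hx : x ∈ t.desc v) : IsSubtreeIsoMap t x s (φ x) φ where
  bijOn := by
    have := (hφ.bijOn.injOn.mono (desc_subset hx)).bijOn_image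
    rwa [← Finset.coe_image, hφ.image_desc hx] at this
  map_root := rfl
  map_par y hy hyx := hφ.map_par y (desc_trans hx hy) <| by
    rintro rfl
    exact hyx (eq_of_mem_desc_of_depth_le hx (depth_le_of_mem_desc hy)).symm

theorem heightAt_eq : s.heightAt w = t.heightAt v := by
  rw [heightAt_eq_sup, heightAt_eq_sup, ← hφ.image_desc_self, Finset.sup_image]
  exact Finset.sup_congr rfl fun y hy => hφ.depth_sub hy

theorem image_children : (t.children v).image φ = s.children w := by
  ext z
  simp only [Finset.mem_image, mem_children_iff]
  constructor
  · rintro ⟨c, ⟨hc, hdc⟩, rfl⟩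
    have := hφ.depth_sub hc
    have := depth_le_of_mem_desc (hφ.mem_desc hc)
    exact ⟨hφ.mem_desc hc, by omega⟩
  · rintro ⟨hz, hdz⟩
    obtain ⟨c, hc, rfl⟩ := hφ.bijOn.surjOn hz
    have := hφ.depth_sub hc
    have := depth_le_of_mem_desc hc
    exact ⟨c, ⟨hc, by omega⟩, rfl⟩

theorem gam_eq (k : ℕ) : t.gam v k = s.gam w k := by
  have hsub : t.children v ⊆ t.desc v := fun _ => mem_desc_of_mem_children
  rw [gam, gam, ← hφ.image_children, Finset.filter_image,
    Finset.card_image_of_injOn (hφ.bijOn.injOn.mono ((Finset.filter_subset _ _).trans hsub))]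
  refine congrArg Finset.card (Finset.filter_congr fun c hc => ?_)
  rw [(hφ.restrict (hsub hc)).heightAt_eq]

end IsSubtreeIsoMap

theorem SelfNested.gam_eq (hs : s.SelfNested) (hu : u ∈ s.supp) (hw : w ∈ s.supp)
    (h : s.heightAt u = s.heightAt w) (k : ℕ) : s.gam u k = s.gam w k := by
  obtain ⟨φ, hφ⟩ := subtreeIso_iff.1 (hs u hu w hw h)
  exact hφ.gam_eq k

open Classical in
noncomputable def glue (t : FTree) (v w : ℕ) (Φ : t.children v → ℕ → ℕ) (x : ℕ) : ℕ :=
  if h : ∃ c : t.children v, x ∈ t.desc c then Φ h.choose x else w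

theorem glue_of_mem_desc {Φ : t.children v → ℕ → ℕ} (c : t.children v) (hx : x ∈ t.desc c) :
    t.glue v w Φ x = Φ c x := by
  have h : ∃ c : t.children v, x ∈ t.desc c := ⟨c, hx⟩
  rw [glue, dif_pos h,
    Subtype.ext (eq_of_mem_desc_of_mem_children h.choose.2 c.2 h.choose_spec hx)]

theorem glue_self {Φ : t.children v → ℕ → ℕ} : t.glue v w Φ v = w :=
  dif_neg fun ⟨c, hc⟩ => ne_of_mem_desc_of_mem_children c.2 hc rfl

section Glue

variable (e : t.children v ≃ s.children w) {Φ : t.children v → ℕ → ℕ}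
  (hΦ : ∀ c : t.children v, IsSubtreeIsoMap t c s (e c) (Φ c))
include hΦ

theorem glue_mem_desc (c : t.children v) (hx : x ∈ t.desc c) : t.glue v w Φ x ∈ s.desc (e c) := by
  rw [glue_of_mem_desc c hx]
  exact (hΦ c).mem_desc hx

theorem injOn_glue : Set.InjOn (t.glue v w Φ) (t.desc v) := by
  intro x hx y hy hxy
  obtain rfl | ⟨c, hxc⟩ := eq_or_exists_mem_desc_children hx <;>
    obtain rfl | ⟨c', hyc⟩ := eq_or_exists_mem_desc_children hy
  · rfl
  · have := glue_mem_desc e hΦ c' hyc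
    rw [← hxy, glue_self] at this
    exact absurd this (ne_of_mem_desc_of_mem_children (e c').2 · rfl)
  · have := glue_mem_desc e hΦ c hxc
    rw [hxy, glue_self] at this
    exact absurd this (ne_of_mem_desc_of_mem_children (e c).2 · rfl)
  · have hyc' := glue_mem_desc e hΦ c' hyc
    rw [← hxy] at hyc'
    obtain rfl : c = c' := e.injective <| Subtype.ext <|
      eq_of_mem_desc_of_mem_children (e c).2 (e c').2 (glue_mem_desc e hΦ c hxc) hyc'
    rw [glue_of_mem_desc c hxc, glue_of_mem_desc c hyc] at hxy
    exact (hΦ c).bijOn.injOn hxc hyc hxy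

theorem isSubtreeIsoMap_glue (hv : v ∈ t.supp) (hw : w ∈ s.supp) :
    IsSubtreeIsoMap t v s w (t.glue v w Φ) := by
  refine ⟨⟨fun x hx => ?_, injOn_glue e hΦ, fun z hz => ?_⟩, glue_self, fun x hx hxv => ?_⟩
  · obtain rfl | ⟨c, hxc⟩ := eq_or_exists_mem_desc_children hx
    · rw [glue_self]; exact self_mem_desc hw
    · exact desc_trans (mem_desc_of_mem_children (e c).2) (glue_mem_desc e hΦ c hxc)
  · obtain rfl | ⟨c', hz'⟩ := eq_or_exists_mem_desc_children hz
    · exact ⟨v, self_mem_desc hv, glue_self⟩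
    · obtain ⟨c, rfl⟩ := e.surjective c'
      obtain ⟨x, hx, rfl⟩ := (hΦ c).bijOn.surjOn hz'
      exact ⟨x, desc_trans (mem_desc_of_mem_children c.2) hx, glue_of_mem_desc c hx⟩
  · obtain rfl | ⟨c, hxc⟩ := eq_or_exists_mem_desc_children hx
    · exact absurd rfl hxv
    by_cases hxc_eq : x = c
    · subst hxc_eq
      rw [par_eq_of_mem_children c.2, glue_self, glue_of_mem_desc c hxc, (hΦ c).map_root,
        par_eq_of_mem_children (e c).2]
    · rw [glue_of_mem_desc c (par_mem_desc hxc hxc_eq), glue_of_mem_desc c hxc]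
      exact (hΦ c).map_par x hxc hxc_eq

end Glue

theorem gam_mem_profile (hv : v ∈ t.supp) (k : ℕ) : t.gam v k ∈ t.profile (t.heightAt v) k :=
  Multiset.mem_map.2 ⟨v, Finset.mem_filter.2 ⟨hv, rfl⟩, rfl⟩

theorem exists_of_mem_profile {h k n : ℕ} (hn : n ∈ t.profile h k) :
    ∃ u ∈ t.supp, t.heightAt u = h ∧ t.gam u k = n := by
  obtain ⟨u, hu, rfl⟩ := Multiset.mem_map.1 hn
  exact ⟨u, (Finset.mem_filter.1 hu).1, (Finset.mem_filter.1 hu).2, rfl⟩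

theorem gam_eq_zero_of_heightAt_le {k : ℕ} (hk : t.heightAt v ≤ k) : t.gam v k = 0 :=
  Finset.card_eq_zero.2 <| Finset.filter_eq_empty_iff.2 fun c hc hck => by
    have := heightAt_lt_of_mem_children hc
    omega

section ProfileEq

variable (hs : s.SelfNested) (hprof : ∀ h1 h2, h2 < h1 → t.profile h1 h2 = s.profile h1 h2)
include hs hprof

theorem gam_eq_of_profile_eq (hv : v ∈ t.supp) (hw : w ∈ s.supp)
    (hvw : t.heightAt v = s.heightAt w) (k : ℕ) : t.gam v k = s.gam w k := by
  rcases lt_or_ge k (t.heightAt v) with hk | hk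
  · have hmem := gam_mem_profile hv k
    rw [hprof _ _ hk, hvw] at hmem
    obtain ⟨u, hu, hhu, hgu⟩ := exists_of_mem_profile hmem
    rw [← hgu]
    exact hs.gam_eq hu hw hhu k
  · rw [gam_eq_zero_of_heightAt_le hk, gam_eq_zero_of_heightAt_le (hvw ▸ hk)]

theorem subtreeIso_of_profile_eq (hv : v ∈ t.supp) (hw : w ∈ s.supp)
    (hvw : t.heightAt v = s.heightAt w) : SubtreeIso t v s w := by
  induction hh : t.heightAt v using Nat.strong_induction_on generalizing v w with
  | _ h ih =>
  obtain ⟨e, he⟩ := exists_equiv_children_of_gam_eq (gam_eq_of_profile_eq hs hprof hv hw hvw)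
  have hiso (c : t.children v) : SubtreeIso t c s (e c) :=
    ih _ (hh ▸ heightAt_lt_of_mem_children c.2) (mem_supp_of_mem_children c.2)
      (mem_supp_of_mem_children (e c).2) (he c).symm rfl
  choose Φ hΦ using fun c => subtreeIso_iff.1 (hiso c)
  exact subtreeIso_iff.2 ⟨_, isSubtreeIsoMap_glue e hΦ hv hw⟩

end ProfileEq

theorem height_le_of_profile_eq (hprof : ∀ h1 h2, h2 < h1 → t.profile h1 h2 = s.profile h1 h2) :
    t.height ≤ s.height := by
  rcases Nat.eq_zero_or_pos t.height with h0 | hpos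
  · omega
  have hmem := gam_mem_profile t.root_mem 0
  rw [← height, hprof _ _ hpos] at hmem
  obtain ⟨u, hu, hhu, -⟩ := exists_of_mem_profile hmem
  exact hhu ▸ heightAt_le_height hu

end FTree

theorem selfNested_iso_of_profile_eq_general (t s : FTree)
    (hs : s.SelfNested)
    (hprof : ∀ h1 h2, h2 < h1 → t.profile h1 h2 = s.profile h1 h2) :
    FTree.TreeIso t s := by
  have hheight : t.height = s.height :=
    (FTree.height_le_of_profile_eq hprof).antisymm
      (FTree.height_le_of_profile_eq fun h1 h2 h => (hprof h1 h2 h).symm)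
  exact FTree.subtreeIso_of_profile_eq hs hprof t.root_mem s.root_mem hheight

/-- Two self-nested trees having the same height profile (the same
multiset `ρ(h1,h2)` for every pair of heights `h2 < h1`) are isomorphic: a self-nested
tree is uniquely reconstructed from its height profile. -/
theorem selfNested_iso_of_profile_eq (t s : FTree)
    (ht : t.SelfNested) (hs : s.SelfNested)
    (hprof : ∀ h1 h2, h2 < h1 → t.profile h1 h2 = s.profile h1 h2) :
    FTree.TreeIso t s :=
  selfNested_iso_of_profile_eq_general t s hs hprof
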